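/- arXiv:1405.2419 — 2 statements merged into one kernel-verified Lean document; each statement's English description precedes it below -/
import Mathlib

section
/- Let T > 0, σ > 0, τ > 0 with 0 < 1 − τT < 1, and let η : ℕ → ℝ satisfy Gao's reaching law η(k+1) = (1 − τT) η(k) − σT · sign(η(k)). Then the band {x : |x| ≤ σT} is invariant: if |η(k)| ≤ σT, then |η(k+1)| ≤ σT. -/
/-- Under Gao's reaching law `η(k+1) = (1 − τT) η(k) − σT sign(η(k))` with
`T, σ, τ > 0` and `0 < 1 − τT < 1`, the quasi-sliding-mode band `{x : |x| ≤ σT}`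
is invariant: if `|η(k)| ≤ σT` then `|η(k+1)| ≤ σT`. -/
theorem gao_band_invariant
    (T σ τ : ℝ) (hT : 0 < T) (hσ : 0 < σ) (hτ : 0 < τ)
    (h1 : 0 < 1 - τ * T) (h2 : 1 - τ * T < 1)
    (η : ℕ → ℝ)
    (hη : ∀ k, η (k + 1) = (1 - τ * T) * η k - σ * T * Real.sign (η k)) :
    ∀ k, |η k| ≤ σ * T → |η (k + 1)| ≤ σ * T := by
  intro k hk
  have hc : 0 < σ * T := mul_pos hσ hT
  rw [hη k, abs_le]
  rw [abs_le] at hk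
  rcases lt_trichotomy (η k) 0 with hneg | hzero | hpos
  · rw [Real.sign_of_neg hneg]
    constructor <;> nlinarith
  · rw [hzero, Real.sign_zero]
    constructor <;> nlinarith
  · rw [Real.sign_of_pos hpos]
    constructor <;> nlinarith
end

section
/- Let T > 0, σ > 0, τ > 0 with 0 < 1 − τT < 1, and let η : ℕ → ℝ satisfy Gao's reaching law η(k+1) = (1 − τT) η(k) − σT · sign(η(k)). Then the trajectory reaches the quasi-sliding-mode band in finite time: for every initial value η(0), there exists N ∈ ℕ (one may take any N ≥ |η(0)| / (σT)) such that |η(n)| ≤ σT for all n ≥ N. -/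
lemma gao_step (a c x : ℝ) (ha0 : 0 < a) (ha1 : a < 1) (hc : 0 < c) :
    |a * x - c * Real.sign x| ≤ max c (|x| - c) := by
  rcases lt_trichotomy x 0 with h | h | h
  · rw [Real.sign_of_neg h, abs_of_neg h, abs_le]
    constructor
    · have : -(-x - c) ≤ a * x - c * (-1) := by nlinarith
      calc -(max c (-x - c)) ≤ -(-x - c) := by
            exact neg_le_neg (le_max_right _ _)
        _ ≤ a * x - c * (-1) := this
    · have : a * x - c * (-1) ≤ c := by nlinarith
      exact this.trans (le_max_left _ _)
  · subst h
    simpa using Or.inl hc.le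
  · rw [Real.sign_of_pos h, abs_of_pos h, abs_le]
    constructor
    · have : -c ≤ a * x - c * 1 := by nlinarith
      calc -(max c (x - c)) ≤ -c := neg_le_neg (le_max_left _ _)
        _ ≤ a * x - c * 1 := this
    · have : a * x - c * 1 ≤ x - c := by nlinarith
      exact this.trans (le_max_right _ _)

/-- Under Gao's reaching law `η(k+1) = (1 − τT) η(k) − σT sign(η(k))` with
`T, σ, τ > 0` and `0 < 1 − τT < 1`, the trajectory reaches the quasi-sliding-mode
band `{x : |x| ≤ σT}` in finite time: there exists `N` such that `|η(n)| ≤ σT`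
for all `n ≥ N`, and indeed one may take any `N ≥ |η(0)| / (σT)`. -/
theorem gao_finite_time_reaching
    (T σ τ : ℝ) (hT : 0 < T) (hσ : 0 < σ) (hτ : 0 < τ)
    (h1 : 0 < 1 - τ * T) (h2 : 1 - τ * T < 1)
    (η : ℕ → ℝ)
    (hη : ∀ k, η (k + 1) = (1 - τ * T) * η k - σ * T * Real.sign (η k)) :
    (∃ N : ℕ, ∀ n ≥ N, |η n| ≤ σ * T) ∧
    (∀ N : ℕ, |η 0| / (σ * T) ≤ (N : ℝ) → ∀ n ≥ N, |η n| ≤ σ * T) := by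
  have hc : 0 < σ * T := mul_pos hσ hT
  have bound : ∀ n : ℕ, |η n| ≤ max (σ * T) (|η 0| - n * (σ * T)) := by
    intro n
    induction n with
    | zero => exact le_max_of_le_right (by simp)
    | succ n ih =>
      have hstep : |η (n + 1)| ≤ max (σ * T) (|η n| - σ * T) := by
        rw [hη n]; exact gao_step _ _ _ h1 h2 hc
      refine hstep.trans ?_
      have : |η n| - σ * T ≤ max (σ * T) (|η 0| - ((n : ℝ) + 1) * (σ * T)) := by
        rcases le_max_iff.mp ih with h | h
        · exact le_max_of_le_left (by linarith)
        · exact le_max_of_le_right (by linarith [mul_pos hσ hT])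
      push_cast
      exact max_le (le_max_left _ _) this
  have key : ∀ N : ℕ, |η 0| / (σ * T) ≤ (N : ℝ) → ∀ n ≥ N, |η n| ≤ σ * T := by
    intro N hN n hn
    have hNn : (N : ℝ) ≤ n := by exact_mod_cast hn
    have h0 : |η 0| ≤ n * (σ * T) := by
      rw [div_le_iff₀ hc] at hN
      nlinarith
    have := bound n
    rw [max_eq_left (by linarith)] at this
    exact this
  refine ⟨⟨⌈|η 0| / (σ * T)⌉₊, key _ (Nat.le_ceil _)⟩, key⟩
end
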